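/- Let u = (u|u') and v = (v|v') in Z_2^α × Z_4^β, with associated polynomials and m = lcm(α,β). Then u is orthogonal (under the standard Z_4-valued inner product) to v and to all cyclic shifts v^{(i)} of v if and only if u(x) ∘ v(x) = 0 in Z_4[x]/(x^m - 1), where u(x)∘v(x) = 2u(x)θ_{m/α}(x^α)x^{m-1-deg v(x)}v*(x) + u'(x)θ_{m/β}(x^β)x^{m-1-deg v'(x)}v'*(x) mod (x^m - 1). -/

import Mathlib

open Polynomial

/-- The standard inner product on `Z₂^α × Z₄^β` with values in `Z₄`. -/
def innerZ2Z4 {α β : ℕ} (u v : (Fin α → ZMod 2) × (Fin β → ZMod 4)) : ZMod 4 :=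
  2 * ∑ i, (((u.1 i).val : ZMod 4) * ((v.1 i).val : ZMod 4)) + ∑ j, u.2 j * v.2 j

/-- The `i`-th simultaneous cyclic shift `v^{(i)}`, with subscripts read
modulo `α` and `β` respectively. -/
def cshiftIter {α β : ℕ} [NeZero α] [NeZero β] (i : ℕ)
    (v : (Fin α → ZMod 2) × (Fin β → ZMod 4)) :
    (Fin α → ZMod 2) × (Fin β → ZMod 4) :=
  (fun j => v.1 (j + Fin.ofNat α i), fun j => v.2 (j + Fin.ofNat β i))

/-- The polynomial `∑ uᵢ xⁱ` associated to a vector. -/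
noncomputable def polyOf2 {α : ℕ} (u : Fin α → ZMod 2) : Polynomial (ZMod 2) :=
  ∑ i, C (u i) * X ^ (i : ℕ)

/-- The polynomial `∑ u'ⱼ xʲ` associated to a quaternary vector. -/
noncomputable def polyOf4 {β : ℕ} (u : Fin β → ZMod 4) : Polynomial (ZMod 4) :=
  ∑ j, C (u j) * X ^ (j : ℕ)

/-- Coefficientwise lift of a binary polynomial to `Z₄[x]`, with
coefficients in `{0,1} ⊆ Z₄`. -/
noncomputable def lift24 (p : Polynomial (ZMod 2)) : Polynomial (ZMod 4) :=
  ∑ i ∈ p.support, C (((p.coeff i).val : ℕ) : ZMod 4) * X ^ i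

/-- `θ_k(x^n) = ∑_{i=0}^{k-1} x^{ni}` in `Z₄[x]`. -/
noncomputable def thetaPow (k n : ℕ) : Polynomial (ZMod 4) :=
  ∑ i ∈ Finset.range k, X ^ (n * i)

/-- The bilinear map `∘` of the paper, as a polynomial of `Z₄[x]`
(to be reduced modulo `x^m - 1`, `m = lcm(α,β)`):
`u∘v = 2u(x)θ_{m/α}(x^α)x^{m-1-deg v}v*(x) + u'(x)θ_{m/β}(x^β)x^{m-1-deg v'}v'*(x)`. -/
noncomputable def circ (α β : ℕ) (u v : Polynomial (ZMod 2)) (u' v' : Polynomial (ZMod 4)) :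
    Polynomial (ZMod 4) :=
  2 * lift24 u * thetaPow (Nat.lcm α β / α) α *
      X ^ (Nat.lcm α β - 1 - v.natDegree) * lift24 v.reverse
    + u' * thetaPow (Nat.lcm α β / β) β *
      X ^ (Nat.lcm α β - 1 - v'.natDegree) * v'.reverse

/-!
Divisibility by `X ^ m - 1` only depends on the "cyclic coefficients" of a polynomial, the sums of
its coefficients over the residue classes modulo `m`. Since `α, β ∣ m`, the factor
`u(x) θ_{m/α}(x^α)` is the `m`-periodic extension `∑_{k<m} u_{k mod α} x^k` of `u`, and
`x^{m-1-deg v} v*(x) = ∑_j v_j x^{m-1-j}`. Hence the cyclic coefficient of `x^c` in `u ∘ v` is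
`∑_j u_{c+1+j} v_j = u · v^{(s)}` whenever `c + 1 + s ≡ 0 (mod m)`; as shifts are `m`-periodic,
the `m` cyclic coefficients are exactly the inner products of `u` with the shifts of `v`.
-/

open Finset Fin.NatCast

namespace Polynomial

section Semiring

variable {R : Type*} [Semiring R]

/-- The coefficient of `X ^ (c % m)` in the reduction of a polynomial modulo `X ^ m - 1`. -/
noncomputable def cyclicCoeff (m c : ℕ) : R[X] →ₗ[R] R :=
  lsum fun k => if k ≡ c [MOD m] then LinearMap.id else 0

theorem cyclicCoeff_monomial (m c k : ℕ) (a : R) :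
    cyclicCoeff m c (monomial k a) = if k ≡ c [MOD m] then a else 0 := by
  rw [cyclicCoeff, lsum_apply, sum_monomial_index _ _ (by simp)]
  split_ifs <;> rfl

theorem cyclicCoeff_congr {m c c' : ℕ} (h : c ≡ c' [MOD m]) :
    (cyclicCoeff m c : R[X] →ₗ[R] R) = cyclicCoeff m c' := by
  have hk (k : ℕ) : k ≡ c [MOD m] ↔ k ≡ c' [MOD m] := ⟨(·.trans h), (·.trans h.symm)⟩
  simp only [cyclicCoeff, hk]

theorem cyclicCoeff_add_mul_X_pow (m c e : ℕ) (p : R[X]) :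
    cyclicCoeff m (c + e) (p * X ^ e) = cyclicCoeff m c p := by
  induction p using Polynomial.induction_on' with
  | add p q hp hq => rw [add_mul, map_add, map_add, hp, hq]
  | monomial k a =>
    rw [monomial_mul_X_pow, cyclicCoeff_monomial, cyclicCoeff_monomial]
    simp only [Nat.ModEq.add_iff_right (Nat.ModEq.refl e)]

theorem cyclicCoeff_sum_range {m c : ℕ} (hc : c < m) (g : ℕ → R) :
    cyclicCoeff m c (∑ k ∈ range m, C (g k) * X ^ k) = g c := by
  simp only [map_sum, C_mul_X_pow_eq_monomial, cyclicCoeff_monomial]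
  rw [sum_eq_single_of_mem c (mem_range.mpr hc) fun k hk hkc => if_neg ?_,
    if_pos (Nat.ModEq.refl c)]
  rwa [Nat.ModEq, Nat.mod_eq_of_lt (mem_range.mp hk), Nat.mod_eq_of_lt hc]

theorem coeff_sum_fin_C_mul_X_pow {n : ℕ} (a : Fin n → R) (k : ℕ) :
    (∑ i : Fin n, C (a i) * X ^ (i : ℕ)).coeff k = if h : k < n then a ⟨k, h⟩ else 0 := by
  simp only [finsetSum_coeff, coeff_C_mul_X_pow]
  split_ifs with h
  · rw [Fintype.sum_eq_single ⟨k, h⟩ fun i hi => if_neg fun hk => hi (Fin.ext hk.symm),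
      if_pos rfl]
  · exact sum_eq_zero fun i _ => if_neg fun (hk : k = i) => h (hk ▸ i.isLt)

theorem natDegree_sum_fin_C_mul_X_pow_le {n : ℕ} (a : Fin n → R) :
    (∑ i : Fin n, C (a i) * X ^ (i : ℕ)).natDegree ≤ n - 1 :=
  natDegree_sum_le_of_forall_le _ _ fun i _ =>
    (natDegree_C_mul_X_pow_le _ _).trans (by have := i.isLt; omega)

end Semiring

section CommRing

variable {R : Type*} [CommRing R]

theorem X_pow_sub_one_dvd_sub_sum_cyclicCoeff {m : ℕ} (hm : 0 < m) (p : R[X]) :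
    X ^ m - 1 ∣ p - ∑ c ∈ range m, C (cyclicCoeff m c p) * X ^ c := by
  induction p using Polynomial.induction_on' with
  | add p q hp hq =>
    simpa only [map_add, C_add, add_mul, sum_add_distrib, add_sub_add_comm] using dvd_add hp hq
  | monomial k a =>
    have hfold : ∑ c ∈ range m, C (cyclicCoeff m c (monomial k a)) * X ^ c
        = C a * X ^ (k % m) := by
      rw [sum_eq_single_of_mem (k % m) (mem_range.mpr (Nat.mod_lt k hm)), cyclicCoeff_monomial,
        if_pos (Nat.mod_modEq k m).symm]
      intro c hc hck
      rw [cyclicCoeff_monomial, if_neg, C_0, zero_mul]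
      rwa [Nat.ModEq, Nat.mod_eq_of_lt (mem_range.mp hc), eq_comm]
    have hk : monomial k a = C a * X ^ (k % m) * X ^ (m * (k / m)) := by
      rw [mul_assoc, ← pow_add, Nat.mod_add_div, C_mul_X_pow_eq_monomial]
    rw [hfold, hk, ← mul_sub_one]
    exact dvd_mul_of_dvd_right (pow_one_sub_dvd_pow_mul_sub_one X m (k / m)) _

theorem X_pow_sub_one_dvd_iff_cyclicCoeff_eq_zero {m : ℕ} (hm : 0 < m) (p : R[X]) :
    X ^ m - 1 ∣ p ↔ ∀ c, cyclicCoeff m c p = 0 := by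
  nontriviality R
  have hdvd := X_pow_sub_one_dvd_sub_sum_cyclicCoeff hm p
  set r := ∑ c ∈ range m, C (cyclicCoeff m c p) * X ^ c
  have hcoeff (c : ℕ) (hc : c < m) : r.coeff c = cyclicCoeff m c p := by
    simp [r, hc]
  constructor
  · intro hp c
    have hr : r = 0 := by
      by_contra hr
      have hmonic : (X ^ m - C 1 : R[X]).Monic := monic_X_pow_sub_C 1 hm.ne'
      refine hmonic.not_dvd_of_natDegree_lt hr ?_ ?_
      · have : r.natDegree ≤ m - 1 := natDegree_sum_le_of_forall_le _ _ fun c hc =>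
          (natDegree_C_mul_X_pow_le _ c).trans (by have := mem_range.mp hc; omega)
        rw [natDegree_X_pow_sub_C]
        omega
      · simpa using dvd_sub hp hdvd
    rw [cyclicCoeff_congr (Nat.mod_modEq c m).symm, ← hcoeff _ (Nat.mod_lt c hm), hr, coeff_zero]
  · intro h
    have hr : r = 0 := sum_eq_zero fun c _ => by rw [h, C_0, zero_mul]
    rwa [hr, sub_zero] at hdvd

end CommRing

section CommSemiring

variable {R : Type*} [CommSemiring R]

theorem reflect_sum {ι : Type*} (N : ℕ) (s : Finset ι) (f : ι → R[X]) :
    reflect N (∑ i ∈ s, f i) = ∑ i ∈ s, reflect N (f i) :=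
  map_sum ({ toFun := reflect N, map_zero' := reflect_zero, map_add' := (reflect_add · · N) } :
    R[X] →+ R[X]) f s

theorem X_pow_sub_natDegree_mul_reverse {N : ℕ} {p : R[X]} (hp : p.natDegree ≤ N) :
    X ^ (N - p.natDegree) * p.reverse = reflect N p := by
  have h := reflect_mul (1 : R[X]) p (F := N - p.natDegree) (by simp) le_rfl
  rw [one_mul, reflect_one, Nat.sub_add_cancel hp] at h
  exact h.symm

theorem reflect_sum_fin_C_mul_X_pow {n N : ℕ} (hn : n ≤ N + 1) (b : Fin n → R) :
    reflect N (∑ j : Fin n, C (b j) * X ^ (j : ℕ)) = ∑ j : Fin n, C (b j) * X ^ (N - j) := by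
  simp only [reflect_sum, reflect_C_mul_X_pow]
  exact Fintype.sum_congr _ _ fun j => by rw [revAt_le (by omega)]

theorem sum_fin_C_mul_X_pow_mul_sum_range_X_pow_mul {n : ℕ} [NeZero n] (a : Fin n → R)
    (q : ℕ) :
    (∑ i : Fin n, C (a i) * X ^ (i : ℕ)) * ∑ t ∈ range q, X ^ (n * t)
      = ∑ k ∈ range (n * q), C (a k) * X ^ k := by
  induction q with
  | zero => simp
  | succ q ih =>
    rw [sum_range_succ, mul_add, ih, Nat.mul_succ, sum_range_add, sum_mul,
      ← Fin.sum_univ_eq_sum_range (fun k => C (a (n * q + k : ℕ)) * X ^ (n * q + k))]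
    congr 1
    refine Fintype.sum_congr _ _ fun i => ?_
    have hi : ((n * q + i : ℕ) : Fin n) = i := by
      rw [Nat.cast_add, Fin.natCast_eq_zero.mpr (dvd_mul_right n q), zero_add,
        Fin.cast_val_eq_self]
    rw [hi, mul_assoc, ← pow_add, add_comm]

theorem cyclicCoeff_sum_range_mul_X_pow {m c j : ℕ} (hj : j < m) (g : ℕ → R) :
    cyclicCoeff m c ((∑ k ∈ range m, C (g k) * X ^ k) * X ^ (m - 1 - j))
      = g ((c + 1 + j) % m) := by
  have hc : (c + 1 + j) % m + (m - 1 - j) ≡ c [MOD m] :=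
    calc _ ≡ c + 1 + j + (m - 1 - j) [MOD m] := (Nat.mod_modEq _ m).add_right _
      _ = c + m := by omega
      _ ≡ c [MOD m] := Nat.add_mod_right c m
  rw [← cyclicCoeff_congr hc, cyclicCoeff_add_mul_X_pow,
    cyclicCoeff_sum_range (Nat.mod_lt _ (by omega))]

theorem cyclicCoeff_sum_fin_mul_sum_range_mul_reflect {m n c s : ℕ} [NeZero n] (hn : n ∣ m)
    (hs : m ∣ c + 1 + s) (a b : Fin n → R) :
    cyclicCoeff m c ((∑ i : Fin n, C (a i) * X ^ (i : ℕ))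
        * (∑ t ∈ range (m / n), X ^ (n * t))
        * reflect (m - 1) (∑ j : Fin n, C (b j) * X ^ (j : ℕ)))
      = ∑ i, a i * b (i + s) := by
  have hm : 0 < m := Nat.pos_of_dvd_of_pos hs (by omega)
  rw [sum_fin_C_mul_X_pow_mul_sum_range_X_pow_mul, Nat.mul_div_cancel' hn,
    reflect_sum_fin_C_mul_X_pow (by have := Nat.le_of_dvd hm hn; omega), mul_sum, map_sum]
  have hterm (j : Fin n) : cyclicCoeff m c
      ((∑ k ∈ range m, C (a k) * X ^ k) * (C (b j) * X ^ (m - 1 - j)))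
        = b j * a (c + 1 + j : ℕ) := by
    have hj : (j : ℕ) < m := j.isLt.trans_le (Nat.le_of_dvd hm hn)
    rw [mul_left_comm, ← smul_eq_C_mul, map_smul, smul_eq_mul,
      cyclicCoeff_sum_range_mul_X_pow hj]
    congr 2
    exact Fin.ext (by simp only [Fin.val_natCast, Nat.mod_mod_of_dvd _ hn])
  simp only [hterm]
  refine (Fintype.sum_equiv (Equiv.addRight (s : Fin n)) _ _ fun i => ?_).symm
  have hi : ((c + 1 + (i + s : Fin n) : ℕ) : Fin n) = i :=
    calc _ = i + ((c + 1 + s : ℕ) : Fin n) := by push_cast; abel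
      _ = i := by rw [Fin.natCast_eq_zero.mpr (hn.trans hs), add_zero]
  rw [Equiv.coe_addRight, hi, mul_comm]

end CommSemiring

end Polynomial

theorem dvd_add_sub_one_mul {m : ℕ} (hm : 0 < m) (k : ℕ) : m ∣ k + (m - 1) * k :=
  Dvd.intro k (by rw [Nat.sub_one_mul, Nat.add_sub_cancel' (Nat.le_mul_of_pos_left k hm)])

theorem coeff_lift24 (p : (ZMod 2)[X]) (n : ℕ) :
    (lift24 p).coeff n = ((p.coeff n).val : ZMod 4) := by
  rw [lift24, finsetSum_coeff]
  simp only [coeff_C_mul_X_pow, sum_ite_eq, mem_support_iff]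
  split_ifs with h
  · rfl
  · rw [not_not.mp h, ZMod.val_zero, Nat.cast_zero]

theorem lift24_X_pow_mul (s : ℕ) (p : (ZMod 2)[X]) : lift24 (X ^ s * p) = X ^ s * lift24 p := by
  ext n
  simp only [coeff_lift24, coeff_X_pow_mul']
  split_ifs
  · rfl
  · rw [ZMod.val_zero, Nat.cast_zero]

theorem lift24_reflect (N : ℕ) (p : (ZMod 2)[X]) :
    lift24 (reflect N p) = reflect N (lift24 p) := by
  ext n
  rw [coeff_lift24, coeff_reflect, coeff_reflect, coeff_lift24]

theorem lift24_polyOf2 {α : ℕ} (w : Fin α → ZMod 2) :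
    lift24 (polyOf2 w) = polyOf4 fun i => ((w i).val : ZMod 4) := by
  ext n
  rw [coeff_lift24, polyOf2, polyOf4, coeff_sum_fin_C_mul_X_pow, coeff_sum_fin_C_mul_X_pow]
  split_ifs
  · rfl
  · rw [ZMod.val_zero, Nat.cast_zero]

theorem X_pow_mul_lift24_reverse_polyOf2 {α N : ℕ} (hα : α ≤ N + 1) (w : Fin α → ZMod 2) :
    X ^ (N - (polyOf2 w).natDegree) * lift24 (polyOf2 w).reverse
      = reflect N (polyOf4 fun i => ((w i).val : ZMod 4)) := by
  have hw : (polyOf2 w).natDegree ≤ N := (natDegree_sum_fin_C_mul_X_pow_le w).trans (by omega)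
  rw [← lift24_X_pow_mul, X_pow_sub_natDegree_mul_reverse hw, lift24_reflect, lift24_polyOf2]

theorem X_pow_mul_reverse_polyOf4 {β N : ℕ} (hβ : β ≤ N + 1) (w : Fin β → ZMod 4) :
    X ^ (N - (polyOf4 w).natDegree) * (polyOf4 w).reverse = reflect N (polyOf4 w) :=
  X_pow_sub_natDegree_mul_reverse ((natDegree_sum_fin_C_mul_X_pow_le w).trans (by omega))

theorem cyclicCoeff_circ {α β c s : ℕ} [NeZero α] [NeZero β]
    (hs : Nat.lcm α β ∣ c + 1 + s)
    (u v : (Fin α → ZMod 2) × (Fin β → ZMod 4)) :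
    cyclicCoeff (Nat.lcm α β) c
        (circ α β (polyOf2 u.1) (polyOf2 v.1) (polyOf4 u.2) (polyOf4 v.2))
      = innerZ2Z4 u (cshiftIter s v) := by
  have hm : 0 < Nat.lcm α β := Nat.lcm_pos (NeZero.pos α) (NeZero.pos β)
  have hαm := Nat.le_of_dvd hm (Nat.dvd_lcm_left α β)
  have hβm := Nat.le_of_dvd hm (Nat.dvd_lcm_right α β)
  have hcirc : circ α β (polyOf2 u.1) (polyOf2 v.1) (polyOf4 u.2) (polyOf4 v.2)
      = 2 * (lift24 (polyOf2 u.1) * thetaPow (Nat.lcm α β / α) α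
          * (X ^ (Nat.lcm α β - 1 - (polyOf2 v.1).natDegree) * lift24 (polyOf2 v.1).reverse))
        + polyOf4 u.2 * thetaPow (Nat.lcm α β / β) β
          * (X ^ (Nat.lcm α β - 1 - (polyOf4 v.2).natDegree) * (polyOf4 v.2).reverse) := by
    rw [circ]; ring
  rw [hcirc, X_pow_mul_lift24_reverse_polyOf2 (by omega), X_pow_mul_reverse_polyOf4 (by omega),
    lift24_polyOf2, two_mul, map_add, map_add]
  simp only [polyOf4, thetaPow]
  rw [cyclicCoeff_sum_fin_mul_sum_range_mul_reflect (Nat.dvd_lcm_left α β) hs,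
    cyclicCoeff_sum_fin_mul_sum_range_mul_reflect (Nat.dvd_lcm_right α β) hs, ← two_mul]
  simp only [innerZ2Z4, cshiftIter, Fin.ofNat_eq_cast]

theorem orthogonal_all_shifts_iff_circ_eq_zero (α β : ℕ) [NeZero α] [NeZero β]
    (u v : (Fin α → ZMod 2) × (Fin β → ZMod 4)) :
    (∀ i : ℕ, innerZ2Z4 u (cshiftIter i v) = 0) ↔
      (X ^ Nat.lcm α β - 1 : Polynomial (ZMod 4)) ∣
        circ α β (polyOf2 u.1) (polyOf2 v.1) (polyOf4 u.2) (polyOf4 v.2) := by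
  have hm : 0 < Nat.lcm α β := Nat.lcm_pos (NeZero.pos α) (NeZero.pos β)
  rw [X_pow_sub_one_dvd_iff_cyclicCoeff_eq_zero hm]
  constructor
  · intro h c
    rw [cyclicCoeff_circ (s := (Nat.lcm α β - 1) * (c + 1)) (dvd_add_sub_one_mul hm _)]
    exact h _
  · intro h s
    rw [← cyclicCoeff_circ (c := (Nat.lcm α β - 1) * (s + 1)) (by
      convert dvd_add_sub_one_mul hm (s + 1) using 1; ring)]
    exact h _
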